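/- arXiv:math/0507476 — 4 statements merged into one kernel-verified Lean document; each statement's English description precedes it below -/
import Mathlib

section
/- Let A be a commutative Noetherian ring, let K be a bounded cochain complex of finitely generated free A-modules, and let J be an ideal of A annihilating H^q(K) for every q. For m ≥ 0 let J^m K denote the subcomplex of K whose degree-q term is the submodule J^m·K^q. Then there exists n ∈ ℕ such that for every m ≥ 0 and every q, the map H^q(J^{n+m}K) → H^q(J^m K) induced by the inclusion of complexes J^{n+m}K ⊆ J^m K is zero. -/
/-!
Fix a degree `q` and let `Z = ker d^q`. Artin–Rees for `Z ⊆ K^q` gives `k_q` with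
`J^(k_q + m + 1) K^q ∩ Z ⊆ J^(m + 1) Z`, and since `J` kills `H^q(K)` we have `J Z ⊆ d(K^(q-1))`,
hence `J^(m + 1) Z ⊆ d(J^m K^(q-1))`: every cocycle of `J^(k_q + 1 + m) K` is a coboundary in
`J^m K`. As `K` is bounded only finitely many degrees matter, and `n = 1 + max_q k_q` works.
-/

open CategoryTheory Limits

namespace ArtinReesComplex

variable {A : Type*} [CommRing A]

lemma map_mem_smul_top {M N : Type*} [AddCommGroup M] [Module A M] [AddCommGroup N]
    [Module A N] (f : M →ₗ[A] N) (I : Ideal A) {x : M}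
    (hx : x ∈ I • (⊤ : Submodule A M)) : f x ∈ I • (⊤ : Submodule A N) := by
  have h1 : f x ∈ Submodule.map f (I • (⊤ : Submodule A M)) := Submodule.mem_map_of_mem hx
  rw [Submodule.map_smul''] at h1
  exact (smul_mono_right I le_top :
    I • Submodule.map f ⊤ ≤ I • (⊤ : Submodule A N)) h1

/-- The differential of the subcomplex `J^m K`, i.e. the restriction of the
differential of `K` to the submodules `J^m · K^q`. -/
noncomputable def resD (J : Ideal A) (K : CochainComplex (ModuleCat A) ℤ) (m : ℕ)
    (i j : ℤ) :
    ↥(J ^ m • (⊤ : Submodule A (K.X i))) →ₗ[A] ↥(J ^ m • (⊤ : Submodule A (K.X j))) :=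
  (K.d i j).hom.restrict (fun x hx => map_mem_smul_top _ _ hx)

lemma resD_shape (J : Ideal A) (K : CochainComplex (ModuleCat A) ℤ) (m : ℕ)
    {i j : ℤ} (h : ¬ (ComplexShape.up ℤ).Rel i j) : resD J K m i j = 0 := by
  have h0 : K.d i j = 0 := K.shape i j h
  apply LinearMap.ext
  intro x
  refine Subtype.ext ?_
  show (K.d i j).hom x.1 = 0
  rw [h0]
  rfl

lemma resD_comp (J : Ideal A) (K : CochainComplex (ModuleCat A) ℤ) (m : ℕ)
    (i j k : ℤ) : resD J K m j k ∘ₗ resD J K m i j = 0 := by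
  apply LinearMap.ext
  intro x
  refine Subtype.ext ?_
  have h0 : (K.d j k).hom ∘ₗ (K.d i j).hom = 0 := by
    rw [← ModuleCat.hom_comp, K.d_comp_d, ModuleCat.hom_zero]
  exact LinearMap.congr_fun h0 x.1

/-- The subcomplex `J^m K` of a cochain complex `K` of `A`-modules, whose degree-`q`
term is `J^m · K^q`. -/
noncomputable def smulSubcomplex (J : Ideal A) (K : CochainComplex (ModuleCat A) ℤ)
    (m : ℕ) : CochainComplex (ModuleCat A) ℤ where
  X q := ModuleCat.of A ↥(J ^ m • (⊤ : Submodule A (K.X q)))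
  d i j := ModuleCat.ofHom (resD J K m i j)
  shape i j h := ModuleCat.hom_ext (resD_shape J K m h)
  d_comp_d' i j k _ _ := ModuleCat.hom_ext (resD_comp J K m i j k)

/-- The inclusion of subcomplexes `J^{m'} K ⟶ J^m K` for `m ≤ m'`. -/
noncomputable def smulSubcomplexIncl (J : Ideal A) (K : CochainComplex (ModuleCat A) ℤ)
    {m m' : ℕ} (h : m ≤ m') : smulSubcomplex J K m' ⟶ smulSubcomplex J K m where
  f q := ModuleCat.ofHom <| Submodule.inclusion
    (show (J ^ m' • (⊤ : Submodule A (K.X q))) ≤ J ^ m • (⊤ : Submodule A (K.X q)) from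
      Submodule.smul_mono_left (Ideal.pow_le_pow_right h))
  comm' i j _ := by
    apply ModuleCat.hom_ext
    apply LinearMap.ext
    intro x
    exact Subtype.ext rfl

end ArtinReesComplex

namespace CategoryTheory.ShortComplex

variable {R : Type*} [Ring R]

lemma moduleCat_homologyπ_eq_zero_iff (S : ShortComplex (ModuleCat R)) (z : S.cycles) :
    S.homologyπ z = 0 ↔ S.iCycles z ∈ LinearMap.range S.f.hom := by
  rw [← (ModuleCat.mono_iff_injective S.homologyι).1 inferInstance |>.eq_iff' (map_zero _),
    ← ConcreteCategory.comp_apply, homology_π_ι, ConcreteCategory.comp_apply,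
    moduleCat_pOpcycles_eq_zero_iff]

lemma moduleCat_homologyMap_eq_zero {S₁ S₂ : ShortComplex (ModuleCat R)} (φ : S₁ ⟶ S₂)
    (h : ∀ x, S₁.g x = 0 → φ.τ₂ x ∈ LinearMap.range S₂.f.hom) :
    homologyMap φ = 0 := by
  rw [← cancel_epi S₁.homologyπ, comp_zero, homologyπ_naturality]
  ext z
  change S₂.homologyπ (cyclesMap φ z) = 0
  rw [moduleCat_homologyπ_eq_zero_iff, ← ConcreteCategory.comp_apply, cyclesMap_i,
    ConcreteCategory.comp_apply]
  exact h _ (by rw [← ConcreteCategory.comp_apply, iCycles_g]; rfl)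

lemma moduleCat_smul_mem_range_of_smul_homology_eq_zero {S : ShortComplex (ModuleCat R)} {r : R}
    (hr : ∀ y : S.homology, r • y = 0) {x : S.X₂} (hx : S.g x = 0) :
    r • x ∈ LinearMap.range S.f.hom := by
  obtain ⟨z, rfl⟩ : ∃ z : S.cycles, S.iCycles z = x :=
    ⟨S.moduleCatCyclesIso.inv ⟨x, hx⟩, moduleCatCyclesIso_inv_iCycles_apply _ _⟩
  rw [← map_smul, ← moduleCat_homologyπ_eq_zero_iff, map_smul]
  exact hr _

end CategoryTheory.ShortComplex

section

variable {R M : Type*} [CommRing R] [AddCommGroup M] [Module R M]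

lemma Ideal.exists_pow_smul_top_inf_le_pow_smul [IsNoetherianRing R] [Module.Finite R M]
    (I : Ideal R) (N : Submodule R M) :
    ∃ k : ℕ, ∀ m n : ℕ, m + k ≤ n → I ^ n • (⊤ : Submodule R M) ⊓ N ≤ I ^ m • N := by
  obtain ⟨k, hk⟩ := I.exists_pow_inf_eq_pow_smul N
  refine ⟨k, fun m n hmn => ?_⟩
  rw [hk n (by omega)]
  exact Submodule.smul_mono (Ideal.pow_le_pow_right (by omega)) inf_le_right

lemma Submodule.pow_succ_smul_le_map_pow_smul_top {P : Type*} [AddCommGroup P] [Module R P]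
    {I : Ideal R} {N : Submodule R M} {f : P →ₗ[R] M} (hN : I • N ≤ LinearMap.range f) (m : ℕ) :
    I ^ (m + 1) • N ≤ (I ^ m • (⊤ : Submodule R P)).map f := by
  rw [pow_succ, ← smul_eq_mul, Submodule.smul_assoc, Submodule.map_smul'', Submodule.map_top]
  exact smul_mono_right _ hN

lemma HomologicalComplex.smul_ker_d_le_range_d {ι : Type*} {c : ComplexShape ι}
    (K : HomologicalComplex (ModuleCat R) c) (q : ι) {J : Ideal R}
    (hJ : ∀ r ∈ J, ∀ x : K.homology q, r • x = 0) :
    J • LinearMap.ker (K.d q (c.next q)).hom ≤ LinearMap.range (K.d (c.prev q) q).hom :=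
  Submodule.smul_le.2 fun r hr _ hx =>
    ShortComplex.moduleCat_smul_mem_range_of_smul_homology_eq_zero (hJ r hr) hx

end

namespace ArtinReesComplex

variable {A : Type*} [CommRing A]

lemma homologyMap_smulSubcomplexIncl_eq_zero_of_le (J : Ideal A)
    (K : CochainComplex (ModuleCat A) ℤ) {m m' : ℕ} (h : m ≤ m') (q : ℤ)
    (hq : J ^ m' • (⊤ : Submodule A (K.X q)) ⊓
        LinearMap.ker (K.d q ((ComplexShape.up ℤ).next q)).hom ≤
      Submodule.map (K.d ((ComplexShape.up ℤ).prev q) q).hom (J ^ m • ⊤)) :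
    HomologicalComplex.homologyMap (smulSubcomplexIncl J K h) q = 0 := by
  refine ShortComplex.moduleCat_homologyMap_eq_zero _ fun x hx => ?_
  obtain ⟨y, hy, hyx⟩ := hq ⟨x.2, congrArg Subtype.val hx⟩
  exact ⟨⟨y, hy⟩, Subtype.ext hyx⟩

theorem exists_homologyMap_smulSubcomplexIncl_eq_zero_general
    (A : Type*) [CommRing A] [IsNoetherianRing A] (J : Ideal A)
    (K : CochainComplex (ModuleCat A) ℤ)
    (hfin : ∀ q : ℤ, Module.Finite A (K.X q))
    (hbdd : ∃ a b : ℤ, ∀ q : ℤ, (q < a ∨ b < q) → IsZero (K.X q))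
    (hann : ∀ (q : ℤ) (c : A), c ∈ J → ∀ x : K.homology q, c • x = 0) :
    ∃ n : ℕ, ∀ (m : ℕ) (q : ℤ),
      HomologicalComplex.homologyMap
        (smulSubcomplexIncl J K (Nat.le_add_left m n)) q = 0 := by
  obtain ⟨a, b, hzero⟩ := hbdd
  choose k hk using fun q => have := hfin q;
    J.exists_pow_smul_top_inf_le_pow_smul (LinearMap.ker (K.d q ((ComplexShape.up ℤ).next q)).hom)
  refine ⟨(Finset.Icc a b).sup k + 1, fun m q =>
    homologyMap_smulSubcomplexIncl_eq_zero_of_le _ _ _ _ ?_⟩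
  by_cases hq : q ∈ Finset.Icc a b
  · have hkq := Finset.le_sup (f := k) hq
    exact (hk q (m + 1) _ (by omega)).trans
      (Submodule.pow_succ_smul_le_map_pow_smul_top (K.smul_ker_d_le_range_d q (hann q)) m)
  · have : Subsingleton (K.X q) :=
      ModuleCat.isZero_iff_subsingleton.1 (hzero q (by simp only [Finset.mem_Icc] at hq; omega))
    intro x _
    rw [Subsingleton.elim x 0]
    exact zero_mem _

/-- **Artin–Rees for bounded complexes.**  Let `A` be commutative Noetherian, `K` a
bounded cochain complex of finitely generated free `A`-modules, and `J` an ideal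
annihilating the cohomology `H^q(K)` for all `q`.  Then there is `n` such that for all
`m ≥ 0` and all `q`, the map `H^q(J^{n+m} K) → H^q(J^m K)` induced by the inclusion
is zero. -/
theorem exists_homologyMap_smulSubcomplexIncl_eq_zero
    (A : Type*) [CommRing A] [IsNoetherianRing A] (J : Ideal A)
    (K : CochainComplex (ModuleCat A) ℤ)
    (hfree : ∀ q : ℤ, Module.Free A (K.X q))
    (hfin : ∀ q : ℤ, Module.Finite A (K.X q))
    (hbdd : ∃ a b : ℤ, ∀ q : ℤ, (q < a ∨ b < q) → IsZero (K.X q))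
    (hann : ∀ (q : ℤ) (c : A), c ∈ J → ∀ x : K.homology q, c • x = 0) :
    ∃ n : ℕ, ∀ (m : ℕ) (q : ℤ),
      HomologicalComplex.homologyMap
        (smulSubcomplexIncl J K (Nat.le_add_left m n)) q = 0 :=
  exists_homologyMap_smulSubcomplexIncl_eq_zero_general A J K hfin hbdd hann

end ArtinReesComplex
end

section
/- Let R be a commutative ring, d ∈ ℕ, and let E be an R-module equipped with a locally nilpotent divided-power module structure, i.e. a family of R-linear endomorphisms u_I of E indexed by multi-indices I ∈ ℕ^d, with u_0 = id, u_I ∘ u_J = binom(I+J, I)·u_{I+J} for all I, J, and such that for every e ∈ E there is an N with u_I e = 0 whenever |I| ≥ N. Let P = R[X_1,…,X_d] be the polynomial ring, for each multi-index I let D_I : P → P be the R-linear divided-power (Hasse) derivative with D_I(X^J) = binom(J, I)·X^{J−I} if I ≤ J and D_I(X^J) = 0 otherwise, and on P ⊗_R E define for each multi-index I the operator θ_I := Σ_{K+K'=I} D_K ⊗ u_{K'}, and define the Casimir operator κ := Σ_I (−1)^{|I|}·(multiplication by X^I ⊗ 1) ∘ θ_I, which is a well-defined R-linear endomorphism of P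 ⊗_R E because the sum is pointwise finite. Then: (1) κ ∘ κ = κ; (2) the image of κ equals the common kernel ⋂_{I ≠ 0} ker θ_I ⊆ P ⊗_R E; (3) the map κ̄ : E → ⋂_{I ≠ 0} ker θ_I sending e to κ(1 ⊗ e) is an isomorphism of R-modules; (4) for every multi-index I one has (D_I ⊗ id_E) ∘ κ̄ = (−1)^{|I|}·κ̄ ∘ u_I. -/
/-!
Let `ε : P ⊗ E → E` be `p ⊗ e ↦ p(0) • e` and `κ̄ e = Σ_I (-1)^{|I|} X^I ⊗ u_I e`.
Since `Σ_K (-1)^{|K|} X^K D_K` sends `X^J` to `(Σ_{K ≤ J} (-1)^{|K|} binom(J, K)) X^J`, it is the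
projection onto the constants; regrouping `κ = Σ_{K, K'} (-1)^{|K| + |K'|} X^{K'} X^K D_K ⊗ u_{K'}`
therefore gives `κ = κ̄ ∘ ε`, while `ε ∘ κ̄ = id`. Reindexing gives `D_I κ̄ = (-1)^{|I|} κ̄ u_I`;
as the `u_I` commute, `θ_J κ̄ = (Σ_{K + K' = J} (-1)^{|K|} binom(J, K)) κ̄ u_J = 0` for `J ≠ 0`.
Conversely on `⋂_{I ≠ 0} ker θ_I` only the term `θ_0 = id` of `κ` survives, so `κ` is the identity
there. All four claims follow.
-/

open scoped TensorProduct BigOperators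

namespace CasimirStmt

variable (R : Type*) [CommRing R] (d : ℕ)

/-- `multiBinom J I = ∏ₖ C(Jₖ, Iₖ)`, the multinomial binomial coefficient of two
multi-indices; it vanishes unless `I ≤ J`. -/
def multiBinom (J I : Fin d →₀ ℕ) : ℕ := ∏ k : Fin d, Nat.choose (J k) (I k)

/-- `|I| = Σₖ Iₖ`, the degree of the multi-index `I`. -/
def degOf (I : Fin d →₀ ℕ) : ℕ := I.sum fun _ n => n

/-- The divided-power (Hasse) derivative `D_I` on `R[X₁,…,X_d]`: the `R`-linear map
with `D_I (X^J) = binom(J, I) • X^(J - I)`. -/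
noncomputable def hasseDeriv (I : Fin d →₀ ℕ) :
    MvPolynomial (Fin d) R →ₗ[R] MvPolynomial (Fin d) R :=
  (MvPolynomial.basisMonomials (Fin d) R).constr R
    (fun J => (multiBinom d J I : R) • (MvPolynomial.monomial (J - I)) (1 : R))

variable (E : Type*) [AddCommGroup E] [Module R E]

/-- `θ_I = Σ_{K + K' = I} D_K ⊗ u_{K'}` acting on `R[X₁,…,X_d] ⊗_R E`. -/
noncomputable def theta (u : (Fin d →₀ ℕ) → E →ₗ[R] E) (I : Fin d →₀ ℕ) :
    MvPolynomial (Fin d) R ⊗[R] E →ₗ[R] MvPolynomial (Fin d) R ⊗[R] E :=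
  ∑ K ∈ Finset.HasAntidiagonal.antidiagonal I, TensorProduct.map (hasseDeriv R d K.1) (u K.2)

/-- The Casimir operator `κ = Σ_I (−1)^{|I|} · (X^I ·) ∘ θ_I` on `R[X₁,…,X_d] ⊗_R E`
(a pointwise finite sum, realized via `finsum`). -/
noncomputable def casimir (u : (Fin d →₀ ℕ) → E →ₗ[R] E) :
    MvPolynomial (Fin d) R ⊗[R] E → MvPolynomial (Fin d) R ⊗[R] E :=
  fun z => ∑ᶠ I : Fin d →₀ ℕ,
    ((-1 : R) ^ degOf d I) •
      (TensorProduct.map (LinearMap.mulLeft R ((MvPolynomial.monomial I) (1 : R)))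
        LinearMap.id) ((theta R d E u I) z)

open Function Finset

section FinsumLinearMap

variable {S ι M N P : Type*} [Semiring S] [AddCommMonoid M] [AddCommMonoid N] [AddCommMonoid P]
  [Module S M] [Module S N] [Module S P]

noncomputable def finsumLinearMap (f : ι → M →ₗ[S] N)
    (hf : ∀ x, HasFiniteSupport fun i => f i x) : M →ₗ[S] N where
  toFun x := ∑ᶠ i, f i x
  map_add' x y := by simp only [map_add]; exact finsum_add_distrib (hf x) (hf y)
  map_smul' r x := by simp only [map_smul]; exact (smul_finsum' r (hf x)).symm

variable {f : ι → M →ₗ[S] N} {hf : ∀ x, HasFiniteSupport fun i => f i x}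

lemma finsumLinearMap_apply (x : M) : finsumLinearMap f hf x = ∑ᶠ i, f i x := rfl

lemma map_finsumLinearMap_apply (g : N →ₗ[S] P) (x : M) :
    g (finsumLinearMap f hf x) = ∑ᶠ i, g (f i x) :=
  map_finsum g (hf x)

end FinsumLinearMap

lemma _root_.Function.HasFiniteSupport.of_imp {α M N : Type*} [Zero M] [Zero N] {f : α → M}
    {g : α → N} (hf : HasFiniteSupport f) (h : ∀ a, f a = 0 → g a = 0) : HasFiniteSupport g :=
  Set.Finite.subset hf fun a hg hfa => hg (h a hfa)

section Finsum

variable {A M : Type*} [AddCommMonoid A] [HasAntidiagonal A] [AddCommMonoid M]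

lemma finsum_sum_antidiagonal {f : A × A → M} (hf : HasFiniteSupport f) :
    ∑ᶠ n, ∑ p ∈ antidiagonal n, f p = ∑ᶠ p, f p := by
  classical
  rw [finsum_eq_sum_of_support_subset f (s := hf.toFinset) hf.coe_toFinset.ge,
    ← finsum_sum_filter (fun p : A × A => p.1 + p.2)]
  refine finsum_congr fun n => ?_
  refine (sum_subset (fun p hp => ?_) fun p hp hps => ?_).symm
  · exact mem_antidiagonal.2 (mem_filter.1 hp).2
  · exact not_not.1 fun h => hps (mem_filter.2 ⟨hf.mem_toFinset.2 h, mem_antidiagonal.1 hp⟩)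

variable [PartialOrder A] [CanonicallyOrderedAdd A] [Sub A] [OrderedSub A] [AddLeftReflectLE A]
  [LocallyFiniteOrderBot A]

lemma sum_antidiagonal_fst_eq_sum_Iic (f : A → M) (n : A) :
    ∑ p ∈ antidiagonal n, f p.1 = ∑ a ∈ Iic n, f a :=
  sum_nbij' Prod.fst (fun a => (a, n - a))
    (fun p hp => mem_Iic.2 (Finset.HasAntidiagonal.antidiagonal.fst_le hp))
    (fun a ha => mem_antidiagonal.2 (add_tsub_cancel_of_le (mem_Iic.1 ha)))
    (fun p hp => Prod.ext rfl (by rw [← mem_antidiagonal.1 hp, add_tsub_cancel_left]))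
    (fun _ _ => rfl) fun _ _ => rfl

end Finsum

lemma finsum_eq_finsum_add_left {A M : Type*} [Add A] [LE A] [ExistsAddOfLE A] [IsLeftCancelAdd A]
    [AddCommMonoid M] (a : A) {f : A → M} (hf : ∀ b, ¬ a ≤ b → f b = 0) :
    ∑ᶠ b, f b = ∑ᶠ c, f (a + c) := by
  rw [← finsum_mem_range (f := f) (add_right_injective a), ← finsum_mem_univ f]
  refine finsum_mem_inter_support_eq' f _ _ fun b hb => ?_
  obtain ⟨c, rfl⟩ := exists_add_of_le (not_not.1 (mt (hf b) hb))
  simp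

section MultiIndex

variable {d}

lemma degOf_eq_degree (I : Fin d →₀ ℕ) : degOf d I = I.degree := rfl

lemma degOf_add (I J : Fin d →₀ ℕ) : degOf d (I + J) = degOf d I + degOf d J :=
  map_add Finsupp.degree I J

@[simp] lemma degOf_zero : degOf d 0 = 0 := map_zero (Finsupp.degree (σ := Fin d))

lemma hasFiniteSupport_of_degOf_bound {M : Type*} [Zero M] {f : (Fin d →₀ ℕ) → M}
    (h : ∃ N : ℕ, ∀ I, N ≤ degOf d I → f I = 0) : HasFiniteSupport f := by
  obtain ⟨N, hN⟩ := h
  exact (Finsupp.finite_of_degree_lt N).subset fun I hI => not_le.1 fun hle => hI (hN I hle)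

lemma multiBinom_eq_zero_of_not_le {J K : Fin d →₀ ℕ} (h : ¬ K ≤ J) : multiBinom d J K = 0 := by
  obtain ⟨k, hk⟩ := not_forall.1 (mt Finsupp.le_def.2 h)
  exact prod_eq_zero (mem_univ k) (Nat.choose_eq_zero_of_lt (not_le.1 hk))

@[simp] lemma multiBinom_zero_right (J : Fin d →₀ ℕ) : multiBinom d J 0 = 1 := by
  simp [multiBinom]

lemma multiBinom_add_comm (I J : Fin d →₀ ℕ) : multiBinom d (I + J) I = multiBinom d (J + I) J :=
  prod_congr rfl fun k _ => by rw [Finsupp.add_apply, Finsupp.add_apply, add_comm (J k),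
    Nat.choose_symm_add]

/-- The sum factors over the coordinates into one-variable alternating binomial sums. -/
lemma sum_Iic_neg_one_pow_mul_multiBinom (J : Fin d →₀ ℕ) :
    ∑ K ∈ Iic J, (-1 : R) ^ degOf d K * multiBinom d J K = if J = 0 then 1 else 0 := by
  have hmem : ∀ K, K ∈ Iic J ↔
      Finsupp.equivFunOnFinite K ∈ Fintype.piFinset fun k => range (J k + 1) := by
    simp [Finsupp.le_def]
  have halt (n : ℕ) :
      ∑ i ∈ range (n + 1), (-1 : R) ^ i * n.choose i = if n = 0 then 1 else 0 := by
    exact_mod_cast congrArg (Int.cast : ℤ → R) Int.alternating_sum_range_choose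
  rw [sum_equiv Finsupp.equivFunOnFinite hmem
      (g := fun K => ∏ k, (-1 : R) ^ K k * (J k).choose (K k))
      fun K _ => by simp [multiBinom, degOf_eq_degree, Finsupp.degree_eq_sum, prod_mul_distrib,
        prod_pow_eq_pow_sum],
    ← prod_univ_sum (t := fun k => range (J k + 1)) (f := fun k i => (-1 : R) ^ i * (J k).choose i)]
  simp only [halt, prod_boole, mem_univ, true_implies, Finsupp.ext_iff, Finsupp.coe_zero,
    Pi.zero_apply]

end MultiIndex

section HasseDeriv

open MvPolynomial

variable {R d}

lemma hasseDeriv_monomial (I J : Fin d →₀ ℕ) (c : R) :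
    hasseDeriv R d I (monomial J c) = (multiBinom d J I : R) • monomial (J - I) c := by
  have hbasis : monomial J c = c • basisMonomials (Fin d) R J := by
    rw [coe_basisMonomials, smul_monomial, smul_eq_mul, mul_one]
  rw [hbasis, map_smul, hasseDeriv, Module.Basis.constr_basis, smul_comm, smul_monomial,
    smul_eq_mul, mul_one]

lemma hasseDeriv_zero : hasseDeriv R d 0 = LinearMap.id :=
  linearMap_ext fun J => LinearMap.ext fun c => by simp [hasseDeriv_monomial]

lemma hasFiniteSupport_hasseDeriv (p : MvPolynomial (Fin d) R) :
    HasFiniteSupport fun K => hasseDeriv R d K p := by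
  refine (Iic (p.support.sup id)).finite_toSet.subset fun K hK => mem_Iic.2 ?_
  by_contra hle
  refine hK ?_
  change hasseDeriv R d K p = 0
  rw [p.as_sum, map_sum]
  refine sum_eq_zero fun J hJ => ?_
  have hKJ : ¬ K ≤ J := fun hKJ => hle (hKJ.trans (le_sup (f := id) hJ))
  rw [hasseDeriv_monomial, multiBinom_eq_zero_of_not_le hKJ, Nat.cast_zero, zero_smul]

lemma finsum_neg_one_pow_smul_monomial_mul_hasseDeriv (p : MvPolynomial (Fin d) R) :
    ∑ᶠ K, (-1 : R) ^ degOf d K • (monomial K 1 * hasseDeriv R d K p) = C (coeff 0 p) := by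
  let L := finsumLinearMap
    (fun K => (-1 : R) ^ degOf d K • (LinearMap.mulLeft R (monomial K 1) ∘ₗ hasseDeriv R d K))
    fun p => (hasFiniteSupport_hasseDeriv p).of_imp fun K h => by simp [h]
  suffices L = Algebra.linearMap R _ ∘ₗ lcoeff R 0 from LinearMap.congr_fun this p
  refine linearMap_ext fun J => LinearMap.ext fun c => ?_
  have hsupp : (support fun K =>
      (-1 : R) ^ degOf d K • (monomial K 1 * hasseDeriv R d K (monomial J c))) ⊆ Iic J :=
    fun K hK => mem_Iic.2 <| not_not.1 fun hle => hK <| by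
      simp [hasseDeriv_monomial, multiBinom_eq_zero_of_not_le hle]
  simp only [L, LinearMap.comp_apply, finsumLinearMap_apply, LinearMap.smul_apply,
    LinearMap.mulLeft_apply]
  rw [finsum_eq_sum_of_support_subset _ hsupp, sum_congr rfl fun K hK => by
    rw [hasseDeriv_monomial, mul_smul_comm, monomial_mul, one_mul,
      add_tsub_cancel_of_le (mem_Iic.1 hK), smul_smul], ← sum_smul,
    sum_Iic_neg_one_pow_mul_multiBinom]
  split_ifs with hJ <;> simp [hJ]

end HasseDeriv

section Casimir

open MvPolynomial TensorProduct Pointwise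

noncomputable def augmentation : MvPolynomial (Fin d) R ⊗[R] E →ₗ[R] E :=
  TensorProduct.lid R E ∘ₗ LinearMap.rTensor E (lcoeff R 0)

lemma augmentation_tmul (p : MvPolynomial (Fin d) R) (e : E) :
    augmentation R d E (p ⊗ₜ e) = coeff 0 p • e := by
  simp [augmentation]

variable {R d E} (u : (Fin d →₀ ℕ) → E →ₗ[R] E)

lemma theta_tmul (I : Fin d →₀ ℕ) (p : MvPolynomial (Fin d) R) (e : E) :
    theta R d E u I (p ⊗ₜ e) = ∑ x ∈ antidiagonal I, hasseDeriv R d x.1 p ⊗ₜ u x.2 e := by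
  simp [theta]

lemma theta_zero (hu0 : u 0 = LinearMap.id) : theta R d E u 0 = LinearMap.id := by
  simp [theta, hu0, hasseDeriv_zero]

lemma casimir_eq_self_of_forall_theta_eq_zero (hu0 : u 0 = LinearMap.id)
    {z : MvPolynomial (Fin d) R ⊗[R] E} (hz : ∀ I, I ≠ 0 → theta R d E u I z = 0) :
    casimir R d E u z = z := by
  rw [casimir, finsum_eq_single _ 0 fun I hI => by rw [hz I hI, map_zero, smul_zero]]
  simp [theta_zero u hu0, ← C_apply]

variable {u}

lemma apply_apply_eq_multiBinom_smul
    (humul : ∀ I J : Fin d →₀ ℕ, u I ∘ₗ u J = multiBinom d (I + J) I • u (I + J))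
    (I J : Fin d →₀ ℕ) (e : E) : u I (u J e) = multiBinom d (I + J) I • u (I + J) e := by
  simpa using LinearMap.congr_fun (humul I J) e

lemma apply_apply_comm
    (humul : ∀ I J : Fin d →₀ ℕ, u I ∘ₗ u J = multiBinom d (I + J) I • u (I + J))
    (I J : Fin d →₀ ℕ) (e : E) : u I (u J e) = u J (u I e) := by
  rw [apply_apply_eq_multiBinom_smul humul, apply_apply_eq_multiBinom_smul humul,
    multiBinom_add_comm, add_comm J]

lemma hasFiniteSupport_theta (hu : ∀ e, HasFiniteSupport fun I => u I e)
    (z : MvPolynomial (Fin d) R ⊗[R] E) : HasFiniteSupport fun I => theta R d E u I z := by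
  induction z using TensorProduct.induction_on with
  | zero => simpa using hasFiniteSupport_zero
  | tmul p e =>
    refine (Set.Finite.add (hasFiniteSupport_hasseDeriv p) (hu e)).subset fun I hI => ?_
    obtain ⟨x, hx, hne⟩ := exists_ne_zero_of_sum_ne_zero (by rwa [← theta_tmul u])
    exact Set.mem_add.2 ⟨x.1, fun h => hne (by simp [h]), x.2, fun h => hne (by simp [h]),
      mem_antidiagonal.1 hx⟩
  | add x y hx hy =>
    exact (Set.Finite.union hx hy).subset fun I hI => support_add _ _ (by simpa using hI)

variable (hu : ∀ e, HasFiniteSupport fun I => u I e)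

noncomputable def casimirLinearMap :
    MvPolynomial (Fin d) R ⊗[R] E →ₗ[R] MvPolynomial (Fin d) R ⊗[R] E :=
  finsumLinearMap
    (fun I => (-1 : R) ^ degOf d I •
      (TensorProduct.map (LinearMap.mulLeft R (monomial I 1)) LinearMap.id ∘ₗ theta R d E u I))
    fun z => (hasFiniteSupport_theta hu z).of_imp fun I h => by simp [h]

lemma coe_casimirLinearMap : ⇑(casimirLinearMap hu) = casimir R d E u := rfl

/-- The map `κ̄` of the paper (`casimir_tmul` shows that `κ (1 ⊗ e) = κ̄ e`). -/
noncomputable def casimirBar : E →ₗ[R] MvPolynomial (Fin d) R ⊗[R] E :=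
  finsumLinearMap (fun I => (-1 : R) ^ degOf d I • (TensorProduct.mk R _ E (monomial I 1) ∘ₗ u I))
    fun e => (hu e).of_imp fun I h => by simp [h]

lemma casimirBar_apply (e : E) :
    casimirBar hu e = ∑ᶠ I, (-1 : R) ^ degOf d I • (monomial I (1 : R) ⊗ₜ u I e) := rfl

lemma casimir_tmul (p : MvPolynomial (Fin d) R) (e : E) :
    casimir R d E u (p ⊗ₜ e) = coeff 0 p • casimirBar hu e := by
  let q : (Fin d →₀ ℕ) → MvPolynomial (Fin d) R := fun K =>
    (-1 : R) ^ degOf d K • (monomial K 1 * hasseDeriv R d K p)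
  let Ψ : (Fin d →₀ ℕ) → MvPolynomial (Fin d) R →ₗ[R] MvPolynomial (Fin d) R ⊗[R] E := fun K' =>
    (-1 : R) ^ degOf d K' • ((TensorProduct.mk R _ E).flip (u K' e) ∘ₗ
      LinearMap.mulLeft R (monomial K' 1))
  have hq : HasFiniteSupport q := (hasFiniteSupport_hasseDeriv p).of_imp fun K h => by simp [q, h]
  have hF : HasFiniteSupport fun x : (Fin d →₀ ℕ) × (Fin d →₀ ℕ) => Ψ x.2 (q x.1) :=
    (Set.Finite.prod hq (hu e)).subset fun x hx =>
      ⟨fun h => hx (by simp [h]), fun h => hx (by simp [Ψ, h])⟩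
  calc casimir R d E u (p ⊗ₜ e)
      = ∑ᶠ I, ∑ x ∈ antidiagonal I, Ψ x.2 (q x.1) := finsum_congr fun I => by
        rw [theta_tmul, map_sum, smul_sum]
        refine sum_congr rfl fun x hx => ?_
        rw [← mem_antidiagonal.1 hx]
        simp [q, Ψ, degOf_add, pow_add, smul_tmul', smul_smul, ← mul_assoc,
          monomial_mul, mul_comm]
    _ = ∑ᶠ K', ∑ᶠ K, Ψ K' (q K) := by
        rw [finsum_sum_antidiagonal hF, ← finsum_comp_equiv (Equiv.prodComm _ _)]
        have hF' : HasFiniteSupport fun x : (Fin d →₀ ℕ) × (Fin d →₀ ℕ) => Ψ x.1 (q x.2) :=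
          HasFiniteSupport.comp_of_injective (g := Prod.swap) Prod.swap_injective hF
        exact finsum_curry _ hF'
    _ = ∑ᶠ K', Ψ K' (C (coeff 0 p)) := finsum_congr fun K' => by
        rw [← map_finsum _ hq, finsum_neg_one_pow_smul_monomial_mul_hasseDeriv]
    _ = coeff 0 p • casimirBar hu e := by
        rw [← map_smul, casimirBar_apply]
        refine finsum_congr fun K' => ?_
        simp [Ψ, mul_comm, C_mul']

lemma casimir_eq_casimirBar_augmentation (z : MvPolynomial (Fin d) R ⊗[R] E) :
    casimir R d E u z = casimirBar hu (augmentation R d E z) := by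
  rw [← coe_casimirLinearMap hu]
  refine LinearMap.congr_fun (TensorProduct.ext' (g := casimirLinearMap hu)
    (h := casimirBar hu ∘ₗ augmentation R d E) fun p e => ?_) z
  simp [coe_casimirLinearMap, casimir_tmul hu, augmentation_tmul]

lemma augmentation_casimirBar (hu0 : u 0 = LinearMap.id) (e : E) :
    augmentation R d E (casimirBar hu e) = e := by
  rw [casimirBar, map_finsumLinearMap_apply,
    finsum_eq_single _ 0 fun I hI => by simp [augmentation_tmul, coeff_monomial, hI]]
  simp [augmentation_tmul, hu0]

lemma hasseDeriv_casimirBar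
    (humul : ∀ I J : Fin d →₀ ℕ, u I ∘ₗ u J = multiBinom d (I + J) I • u (I + J))
    (I : Fin d →₀ ℕ) (e : E) :
    TensorProduct.map (hasseDeriv R d I) LinearMap.id (casimirBar hu e)
      = (-1 : R) ^ degOf d I • casimirBar hu (u I e) := by
  rw [← map_smul, casimirBar_apply, casimirBar_apply,
    map_finsum _ ((hu e).of_imp fun J h => by simp [h]), finsum_eq_finsum_add_left I fun J hJ => by
      simp [hasseDeriv_monomial, multiBinom_eq_zero_of_not_le hJ]]
  refine finsum_congr fun B => ?_
  rw [map_smul (u B), apply_apply_eq_multiBinom_smul humul, ← multiBinom_add_comm, add_comm B I]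
  simp only [map_smul, TensorProduct.map_tmul, hasseDeriv_monomial, add_tsub_cancel_left,
    LinearMap.id_apply, tmul_smul, ← Nat.cast_smul_eq_nsmul R, smul_tmul', smul_smul, degOf_add,
    pow_add]
  ring_nf

lemma lTensor_casimirBar
    (humul : ∀ I J : Fin d →₀ ℕ, u I ∘ₗ u J = multiBinom d (I + J) I • u (I + J))
    (K : Fin d →₀ ℕ) (e : E) :
    LinearMap.lTensor _ (u K) (casimirBar hu e) = casimirBar hu (u K e) := by
  rw [casimirBar, map_finsumLinearMap_apply]
  exact finsum_congr fun I => by simp [apply_apply_comm humul K I]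

lemma theta_casimirBar
    (humul : ∀ I J : Fin d →₀ ℕ, u I ∘ₗ u J = multiBinom d (I + J) I • u (I + J))
    {J : Fin d →₀ ℕ} (hJ : J ≠ 0) (e : E) :
    theta R d E u J (casimirBar hu e) = 0 := calc
  theta R d E u J (casimirBar hu e)
      = ∑ x ∈ antidiagonal J, TensorProduct.map (hasseDeriv R d x.1) LinearMap.id
          (LinearMap.lTensor _ (u x.2) (casimirBar hu e)) := by
        rw [theta, LinearMap.sum_apply]
        exact sum_congr rfl fun x _ => by rw [← LinearMap.rTensor_comp_lTensor]; rfl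
    _ = ∑ x ∈ antidiagonal J, ((-1 : R) ^ degOf d x.1 * multiBinom d J x.1) •
          casimirBar hu (u J e) := sum_congr rfl fun x hx => by
        rw [lTensor_casimirBar hu humul, hasseDeriv_casimirBar hu humul,
          apply_apply_eq_multiBinom_smul humul, mem_antidiagonal.1 hx, map_nsmul, mul_smul,
          Nat.cast_smul_eq_nsmul]
    _ = 0 := by
        rw [← sum_smul,
          sum_antidiagonal_fst_eq_sum_Iic (fun K => (-1 : R) ^ degOf d K * multiBinom d J K),
          sum_Iic_neg_one_pow_mul_multiBinom, if_neg hJ, zero_smul]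

end Casimir

/-- Properties of the Casimir operator `κ` for a locally nilpotent divided-power module
structure `(u_I)` on `E`:  `κ` is `R`-linear, `κ ∘ κ = κ`, `im κ = ⋂_{I ≠ 0} ker θ_I`,
`κ̄ : e ↦ κ(1 ⊗ e)` is an isomorphism of `E` onto `⋂_{I ≠ 0} ker θ_I`, and
`(D_I ⊗ id) ∘ κ̄ = (−1)^{|I|} · κ̄ ∘ u_I`. -/
theorem casimir_isIdempotent_range_eq_and_bijective
    (u : (Fin d →₀ ℕ) → E →ₗ[R] E)
    (hu0 : u 0 = LinearMap.id)
    (humul : ∀ I J : Fin d →₀ ℕ, u I ∘ₗ u J = multiBinom d (I + J) I • u (I + J))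
    (hnil : ∀ e : E, ∃ N : ℕ, ∀ I : Fin d →₀ ℕ, N ≤ degOf d I → u I e = 0) :
    (∀ z w, casimir R d E u (z + w) = casimir R d E u z + casimir R d E u w) ∧
    (∀ (r : R) (z), casimir R d E u (r • z) = r • casimir R d E u z) ∧
    (∀ z, casimir R d E u (casimir R d E u z) = casimir R d E u z) ∧
    (Set.range (casimir R d E u)
      = {z | ∀ I : Fin d →₀ ℕ, I ≠ 0 → theta R d E u I z = 0}) ∧
    Function.Injective
      (fun e : E => casimir R d E u ((1 : MvPolynomial (Fin d) R) ⊗ₜ[R] e)) ∧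
    (∀ e : E, ∀ I : Fin d →₀ ℕ, I ≠ 0 →
      theta R d E u I (casimir R d E u ((1 : MvPolynomial (Fin d) R) ⊗ₜ[R] e)) = 0) ∧
    (∀ z, (∀ I : Fin d →₀ ℕ, I ≠ 0 → theta R d E u I z = 0) →
      ∃ e : E, casimir R d E u ((1 : MvPolynomial (Fin d) R) ⊗ₜ[R] e) = z) ∧
    (∀ (I : Fin d →₀ ℕ) (e : E),
      TensorProduct.map (hasseDeriv R d I) LinearMap.id
          (casimir R d E u ((1 : MvPolynomial (Fin d) R) ⊗ₜ[R] e))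
        = ((-1 : R) ^ degOf d I) •
            casimir R d E u ((1 : MvPolynomial (Fin d) R) ⊗ₜ[R] (u I e))) := by
  have hu e : HasFiniteSupport fun I => u I e := hasFiniteSupport_of_degOf_bound (hnil e)
  have hκ := casimir_eq_casimirBar_augmentation hu
  have hκ₁ (e : E) : casimir R d E u (1 ⊗ₜ e) = casimirBar hu e := by simp [casimir_tmul hu]
  have hε := augmentation_casimirBar hu hu0
  refine ⟨(casimirLinearMap hu).map_add, (casimirLinearMap hu).map_smul, fun z => ?_,
    Set.ext fun z => ⟨?_, fun hz => ⟨z, casimir_eq_self_of_forall_theta_eq_zero u hu0 hz⟩⟩,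
    fun e e' h => ?_, fun e I hI => ?_, fun z hz => ⟨augmentation R d E z, ?_⟩, fun I e => ?_⟩
  · rw [hκ, hκ z, hε]
  · rintro ⟨w, rfl⟩ I hI
    rw [hκ]
    exact theta_casimirBar hu humul hI _
  · simpa [hκ₁, hε] using congrArg (augmentation R d E) h
  · rw [hκ₁]
    exact theta_casimirBar hu humul hI e
  · rw [hκ₁, ← hκ, casimir_eq_self_of_forall_theta_eq_zero u hu0 hz]
  · rw [hκ₁, hκ₁]
    exact hasseDeriv_casimirBar hu humul I e

end CasimirStmt
end

section
/- Let p be a prime number and let A be a commutative ring which is an algebra over ℤ/p²ℤ (so p²·1 = 0 in A). Let I ⊆ A be an ideal equipped with a divided power structure γ (with n-th divided power operation γ_n). Then for every x ∈ A and every ξ ∈ I, the element (x + ξ)^p − x^p + p·γ_p(ξ) lies in the submodule p·I = { p·y : y ∈ I } of A. -/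
/-!
Expanding `(x + ξ)^p` binomially, the middle terms are divisible by `p` and contain a factor `ξ`,
so they lie in `p·I`; the last term is `ξ^p = p! γ_p(ξ)`. By Wilson's theorem `p! ≡ -p`
modulo `p²`, and `p² = 0` in `A`, so `ξ^p = -p γ_p(ξ)`.
-/

open Nat

theorem Nat.Prime.sq_dvd_factorial_add_self {p : ℕ} (hp : p.Prime) : p ^ 2 ∣ p ! + p := by
  have := Fact.mk hp
  have hwilson : p ∣ (p - 1)! + 1 := by
    rw [← ZMod.natCast_eq_zero_iff]
    push_cast
    rw [ZMod.wilsons_lemma, neg_add_cancel]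
  rw [← Nat.mul_factorial_pred hp.ne_zero, sq, ← Nat.mul_add_one]
  exact Nat.mul_dvd_mul_left p hwilson

theorem natCast_eq_zero_of_zmod_algebra (n : ℕ) {A : Type*} [Semiring A]
    [Algebra (ZMod n) A] : (n : A) = 0 := by
  rw [← map_natCast (algebraMap (ZMod n) A), ZMod.natCast_self, map_zero]

theorem factorial_add_self_eq_zero_of_zmod_sq_algebra {p : ℕ} (hp : p.Prime) {A : Type*}
    [Semiring A] [Algebra (ZMod (p ^ 2)) A] : (p ! + p : A) = 0 := by
  obtain ⟨m, hm⟩ := hp.sq_dvd_factorial_add_self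
  rw [← Nat.cast_add, hm, Nat.cast_mul, natCast_eq_zero_of_zmod_algebra, zero_mul]

theorem exists_mem_add_pow_prime_eq {p : ℕ} (hp : p.Prime) {A : Type*} [CommSemiring A]
    {I : Ideal A} (x : A) {ξ : A} (hξ : ξ ∈ I) :
    ∃ y ∈ I, (x + ξ) ^ p = x ^ p + ξ ^ p + p * y := by
  obtain ⟨r, hr⟩ := exists_add_pow_prime_eq hp x ξ
  exact ⟨x * ξ * r, I.mul_mem_right r (I.mul_mem_left x hξ), by rw [hr]; ring⟩

/-- Let `p` be a prime and let `A` be a commutative ring which is an algebra over `ℤ/p²ℤ`.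
Let `I ⊆ A` be an ideal with a divided power structure `γ`.  Then for every `x ∈ A` and
`ξ ∈ I`, the element `(x + ξ)^p - x^p + p·γ_p(ξ)` lies in `p·I = {p·y : y ∈ I}`. -/
theorem pow_p_add_sub_mem_p_smul_of_dividedPowers
    (p : ℕ) (hp : p.Prime) (A : Type*) [CommRing A] [Algebra (ZMod (p ^ 2)) A]
    (I : Ideal A) (γ : DividedPowers I) (x ξ : A) (hξ : ξ ∈ I) :
    ∃ y ∈ I, (x + ξ) ^ p - x ^ p + p * γ.dpow p ξ = p * y := by
  obtain ⟨y, hyI, hexpand⟩ := exists_mem_add_pow_prime_eq hp x hξ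
  refine ⟨y, hyI, ?_⟩
  rw [hexpand, ← γ.factorial_mul_dpow_eq_pow hξ]
  linear_combination γ.dpow p ξ * factorial_add_self_eq_zero_of_zmod_sq_algebra hp (A := A)
end

section
/- Let p be a prime number and let O be a commutative ring which is a flat algebra over ℤ/p²ℤ. Let J̃ ⊆ O be an ideal such that the quotient O/J̃ is also flat over ℤ/p²ℤ, and set J := p·O + J̃. Then p·O ∩ J² = p·J̃ = p·J; in particular p·J ⊆ J², and multiplication by p induces a well-defined injective additive map O/J → J/J², sending the class of a to the class of p·a. -/
/-- If `M` is flat over `R` and scaling by `c : R` is "self-exact" on `R`, then the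
`c`-torsion of `M` is `c • M`. -/
lemma flat_smul_exact {R : Type*} [CommRing R] (c : R)
    (hex : Function.Exact (LinearMap.lsmul R R c) (LinearMap.lsmul R R c))
    (M : Type*) [AddCommGroup M] [Module R M] [Module.Flat R M]
    (m : M) (h : c • m = 0) : ∃ m', m = c • m' := by
  have hT := Module.Flat.lTensor_exact M hex
  set e := TensorProduct.rid R M with he
  have hcomm : ∀ z : TensorProduct R M R,
      e (LinearMap.lTensor M (LinearMap.lsmul R R c) z) = c • e z := by
    intro z
    induction z using TensorProduct.induction_on with
    | zero => simp
    | tmul x y => simp only [he, TensorProduct.rid_tmul, LinearMap.lTensor_tmul,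
        LinearMap.lsmul_apply, smul_eq_mul, mul_smul]
    | add x y hx hy => simp [map_add, hx, hy]
  have h0 : LinearMap.lTensor M (LinearMap.lsmul R R c) (e.symm m) = 0 := by
    apply e.injective
    rw [hcomm, e.apply_symm_apply, h, map_zero]
  obtain ⟨y, hy⟩ := (hT _).mp h0
  refine ⟨e y, ?_⟩
  rw [← hcomm, hy, e.apply_symm_apply]

lemma zmod_p_exact (p : ℕ) (hp : p.Prime) :
    Function.Exact (LinearMap.lsmul (ZMod (p ^ 2)) (ZMod (p ^ 2)) (p : ZMod (p ^ 2)))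
      (LinearMap.lsmul (ZMod (p ^ 2)) (ZMod (p ^ 2)) (p : ZMod (p ^ 2))) := by
  haveI : NeZero (p ^ 2) := ⟨pow_ne_zero 2 hp.ne_zero⟩
  rw [LinearMap.exact_iff]
  ext x
  simp only [LinearMap.mem_ker, LinearMap.mem_range, LinearMap.lsmul_apply, smul_eq_mul]
  constructor
  · intro hx
    have hv : ((p * x.val : ℕ) : ZMod (p ^ 2)) = 0 := by
      push_cast
      rw [ZMod.natCast_zmod_val, hx]
    rw [ZMod.natCast_eq_zero_iff] at hv
    obtain ⟨k, hk⟩ : p ∣ x.val := by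
      obtain ⟨k, hk⟩ := hv
      exact ⟨k, Nat.eq_of_mul_eq_mul_left hp.pos (hk.trans (by ring))⟩
    refine ⟨(k : ZMod (p ^ 2)), ?_⟩
    rw [← ZMod.natCast_zmod_val x, hk]
    push_cast
    ring
  · rintro ⟨y, rfl⟩
    have : ((p : ZMod (p ^ 2)) * (p : ZMod (p ^ 2))) = 0 := by
      rw [← Nat.cast_mul, ← pow_two, ZMod.natCast_self]
    rw [← mul_assoc, this, zero_mul]


/-- Let `p` be a prime and `O` a commutative ring, flat over `ℤ/p²ℤ`.  Let `J̃ ⊆ O` be an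
ideal such that `O/J̃` is flat over `ℤ/p²ℤ`, and set `J := p·O + J̃`.  Then
`p·O ∩ J² = p·J̃ = p·J`; in particular `p·J ⊆ J²`, and multiplication by `p` induces a
well-defined injective additive map `O/J → J/J²` sending the class of `a` to the class
of `p·a` (well-definedness is the inclusion `p·J ⊆ J²`; injectivity is the statement that
`p·a ∈ J²` implies `a ∈ J`). -/
theorem p_smul_intersection_of_flat_mod_p_squared
    (p : ℕ) (hp : p.Prime) (O : Type*) [CommRing O]
    [Algebra (ZMod (p ^ 2)) O] [Module.Flat (ZMod (p ^ 2)) O]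
    (Jt : Ideal O) [Module.Flat (ZMod (p ^ 2)) (O ⧸ Jt)] :
    ∀ J : Ideal O, J = Ideal.span {(p : O)} ⊔ Jt →
      (Ideal.span {(p : O)} ⊓ J ^ 2 = Submodule.map (LinearMap.lsmul O O (p : O)) Jt ∧
      Submodule.map (LinearMap.lsmul O O (p : O)) Jt
        = Submodule.map (LinearMap.lsmul O O (p : O)) J ∧
      Submodule.map (LinearMap.lsmul O O (p : O)) J ≤ J ^ 2 ∧
      ∀ a : O, (p : O) * a ∈ J ^ 2 → a ∈ J) := by
  intro J hJ
  subst hJ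
  set S : Ideal O := Ideal.span {(p : O)} with hS
  set P : Ideal O := Submodule.map (LinearMap.lsmul O O (p : O)) Jt with hP
  -- p² = 0 in O
  have hp2 : (p : O) * (p : O) = 0 := by
    have h1 : (p : O) = algebraMap (ZMod (p ^ 2)) O (p : ZMod (p ^ 2)) := (map_natCast _ p).symm
    have h2 : ((p : ZMod (p ^ 2)) * (p : ZMod (p ^ 2))) = 0 := by
      rw [← Nat.cast_mul, ← pow_two, ZMod.natCast_self]
    rw [h1, ← map_mul, h2, map_zero]
  -- torsion fact in O
  have tor : ∀ a : O, (p : O) * a = 0 → ∃ b, a = (p : O) * b := by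
    intro a ha
    have h0 : (p : ZMod (p ^ 2)) • a = 0 := by
      rwa [Nat.cast_smul_eq_nsmul, nsmul_eq_mul]
    obtain ⟨b, hb⟩ := flat_smul_exact (p : ZMod (p ^ 2)) (zmod_p_exact p hp) O a h0
    rw [Nat.cast_smul_eq_nsmul, nsmul_eq_mul] at hb
    exact ⟨b, hb⟩
  -- torsion fact in O ⧸ Jt
  have torQ : ∀ a : O, (p : O) * a ∈ Jt → ∃ b, a - (p : O) * b ∈ Jt := by
    intro a ha
    have h0 : (p : ZMod (p ^ 2)) • (Ideal.Quotient.mk Jt a) = 0 := by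
      rw [Nat.cast_smul_eq_nsmul, ← map_nsmul, nsmul_eq_mul]
      exact (Ideal.Quotient.eq_zero_iff_mem).mpr ha
    obtain ⟨y, hy⟩ :=
      flat_smul_exact (p : ZMod (p ^ 2)) (zmod_p_exact p hp) (O ⧸ Jt) _ h0
    obtain ⟨b, rfl⟩ := Ideal.Quotient.mk_surjective y
    rw [Nat.cast_smul_eq_nsmul, ← map_nsmul, nsmul_eq_mul] at hy
    refine ⟨b, ?_⟩
    rw [← Ideal.Quotient.eq_zero_iff_mem, map_sub, hy, sub_self]
  have hpmem : (p : O) ∈ S ⊔ Jt := Submodule.mem_sup_left (Ideal.subset_span rfl)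
  have hJt_le : Jt ≤ S ⊔ Jt := le_sup_right
  -- membership in P
  have hPmem : ∀ x : O, x ∈ P ↔ ∃ y ∈ Jt, (p : O) * y = x := by
    intro x
    simp [hP, Submodule.mem_map, LinearMap.lsmul_apply, smul_eq_mul]
  -- P ≤ S ⊓ (S ⊔ Jt)^2
  have hP_le : P ≤ S ⊓ (S ⊔ Jt) ^ 2 := by
    intro x hx
    obtain ⟨y, hy, rfl⟩ := (hPmem x).mp hx
    constructor
    · exact Ideal.mem_span_singleton.mpr (Dvd.intro y rfl)
    · rw [sq]; exact Ideal.mul_mem_mul hpmem (hJt_le hy)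
  -- (S ⊔ Jt)^2 ≤ P ⊔ Jt^2
  have hsq : (S ⊔ Jt) ^ 2 ≤ P ⊔ Jt ^ 2 := by
    rw [sq]
    refine Ideal.mul_le.mpr ?_
    intro x hx y hy
    obtain ⟨s, hs, t, ht, rfl⟩ := Submodule.mem_sup.mp hx
    obtain ⟨s', hs', t', ht', rfl⟩ := Submodule.mem_sup.mp hy
    obtain ⟨c, rfl⟩ := Ideal.mem_span_singleton.mp hs
    obtain ⟨c', rfl⟩ := Ideal.mem_span_singleton.mp hs'
    refine Submodule.mem_sup.mpr ⟨(p : O) * (c * t' + c' * t), ?_, t * t', ?_, ?_⟩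
    · exact (hPmem _).mpr ⟨c * t' + c' * t,
        add_mem (Ideal.mul_mem_left _ _ ht') (Ideal.mul_mem_left _ _ ht), rfl⟩
    · rw [sq]; exact Ideal.mul_mem_mul ht ht'
    · linear_combination (-(c * c')) * hp2
  -- first claim
  have claim1 : S ⊓ (S ⊔ Jt) ^ 2 = P := by
    refine le_antisymm ?_ hP_le
    rintro x ⟨hxS, hx2⟩
    obtain ⟨u, hu, v, hv, rfl⟩ := Submodule.mem_sup.mp (hsq hx2)
    obtain ⟨j, hj, rfl⟩ := (hPmem u).mp hu
    have hvS : v ∈ S := by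
      have : (p : O) * j ∈ S := Ideal.mem_span_singleton.mpr (Dvd.intro j rfl)
      simpa using sub_mem hxS this
    have hvJt : v ∈ Jt := Ideal.pow_le_self two_ne_zero hv
    obtain ⟨c, rfl⟩ := Ideal.mem_span_singleton.mp hvS
    obtain ⟨b, hb⟩ := torQ c hvJt
    refine (hPmem _).mpr ⟨j + (c - (p : O) * b), add_mem hj hb, ?_⟩
    linear_combination (-b) * hp2
  refine ⟨claim1, ?_, ?_, ?_⟩
  · -- P = p • (S ⊔ Jt)
    refine le_antisymm (Submodule.map_mono le_sup_right) ?_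
    rintro x ⟨y, hy, rfl⟩
    obtain ⟨s, hs, t, ht, rfl⟩ := Submodule.mem_sup.mp hy
    obtain ⟨c, rfl⟩ := Ideal.mem_span_singleton.mp hs
    refine (hPmem _).mpr ⟨t, ht, ?_⟩
    simp only [LinearMap.lsmul_apply, smul_eq_mul]
    linear_combination (-c) * hp2
  · -- p • (S ⊔ Jt) ≤ (S ⊔ Jt)^2
    rintro x ⟨y, hy, rfl⟩
    simp only [LinearMap.lsmul_apply, smul_eq_mul]
    rw [sq]
    exact Ideal.mul_mem_mul hpmem hy
  · -- injectivity
    intro a ha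
    have haS : (p : O) * a ∈ S := Ideal.mem_span_singleton.mpr (Dvd.intro a rfl)
    have : (p : O) * a ∈ P := claim1 ▸ (Submodule.mem_inf.mpr ⟨haS, ha⟩)
    obtain ⟨j, hj, hje⟩ := (hPmem _).mp this
    have h0 : (p : O) * (a - j) = 0 := by linear_combination -hje
    obtain ⟨b, hb⟩ := tor _ h0
    have : a = (p : O) * b + j := by linear_combination hb
    rw [this]
    exact Submodule.add_mem _
      (Submodule.mem_sup_left (Ideal.mem_span_singleton.mpr (Dvd.intro b rfl)))
      (Submodule.mem_sup_right hj)
end
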